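/- arXiv:1310.5599 — 2 statements merged into one kernel-verified Lean document; each statement's English description precedes it below -/
import Mathlib

section
/- For every X ∈ ℝ³ and all indices α, β, γ ∈ {1,2,3}, the third partial derivative of ρ² in its first argument, evaluated on the diagonal X̄ = X, is expressed by first derivatives of the Cauchy–Green tensor: ∂³ρ²(X̄,X)/∂X̄^α∂X̄^β∂X̄^γ |_{X̄=X} = ( ∂C_{αγ}/∂X^β + ∂C_{βγ}/∂X^α + ∂C_{αβ}/∂X^γ )(X). -/
/-- Partial derivative of a scalar field on ℝ³ in the coordinate direction `α`. -/
noncomputable def pd (f : (Fin 3 → ℝ) → ℝ) (α : Fin 3) : (Fin 3 → ℝ) → ℝ :=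
  fun X => fderiv ℝ f X (Pi.single α 1)

/-- Right Cauchy–Green tensor component C_{αβ} of the placement χ, as a function of X. -/
noncomputable def CG (χ : (Fin 3 → ℝ) → (Fin 3 → ℝ)) (α β : Fin 3) : (Fin 3 → ℝ) → ℝ :=
  fun X => ∑ i, pd (fun Y => χ Y i) α X * pd (fun Y => χ Y i) β X

section helpers

variable {f g : (Fin 3 → ℝ) → ℝ} {α β : Fin 3} {X : Fin 3 → ℝ}

lemma pd_smooth (hf : ContDiff ℝ (⊤ : ℕ∞) f) (α : Fin 3) : ContDiff ℝ (⊤ : ℕ∞) (pd f α) :=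
  (hf.fderiv_right (by simp)).clm_apply contDiff_const

lemma pd_sum {ι : Type*} [Fintype ι] (F : ι → (Fin 3 → ℝ) → ℝ)
    (h : ∀ i, DifferentiableAt ℝ (F i) X) :
    pd (fun Y => ∑ i, F i Y) α X = ∑ i, pd (F i) α X := by
  simp [pd, fderiv_fun_sum (fun i _ => h i)]

lemma pd_mul (hf : DifferentiableAt ℝ f X) (hg : DifferentiableAt ℝ g X) :
    pd (fun Y => f Y * g Y) α X = pd f α X * g X + f X * pd g α X := by
  simp only [pd, fderiv_fun_mul hf hg, ContinuousLinearMap.add_apply,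
    ContinuousLinearMap.smul_apply, smul_eq_mul]
  ring

lemma pd_sub_const (c : ℝ) (hf : DifferentiableAt ℝ f X) :
    pd (fun Y => f Y - c) α X = pd f α X := by
  simp [pd, fderiv_sub_const]

lemma pd_comm (hf : ContDiff ℝ (⊤ : ℕ∞) f) (α β : Fin 3) (X : Fin 3 → ℝ) :
    pd (pd f α) β X = pd (pd f β) α X := by
  have hF : ContDiff ℝ (⊤ : ℕ∞) (fderiv ℝ f) := hf.fderiv_right (by simp)
  have hFd : DifferentiableAt ℝ (fderiv ℝ f) X :=
    hF.differentiable (by simp) |>.differentiableAt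
  have key : ∀ (a b : Fin 3), pd (pd f a) b X
      = fderiv ℝ (fderiv ℝ f) X (Pi.single b 1) (Pi.single a 1) := by
    intro a b
    have : pd f a = fun Y => (fderiv ℝ f Y) (Pi.single a 1) := rfl
    rw [pd, this, fderiv_clm_apply hFd (differentiableAt_const _)]
    simp
  rw [key α β, key β α]
  exact second_derivative_symmetric
    (fun y => (hf.differentiable (by simp) y).hasFDerivAt) hFd.hasFDerivAt _ _

end helpers

/-- On the diagonal X̄ = X the third partial derivative of ρ² in its first argument is
∂³ρ²/∂X̄^α∂X̄^β∂X̄^γ |_{X̄=X} = ∂C_{αγ}/∂X^β + ∂C_{βγ}/∂X^α + ∂C_{αβ}/∂X^γ. -/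
theorem piola_third_derivative_rho_sq_on_diagonal
    (χ : (Fin 3 → ℝ) → (Fin 3 → ℝ)) (hχ : ContDiff ℝ (⊤ : ℕ∞) χ)
    (X : Fin 3 → ℝ) (α β γ : Fin 3) :
    pd (pd (pd (fun Y => ∑ i, (χ Y i - χ X i) ^ 2) α) β) γ X
      = pd (CG χ α γ) β X + pd (CG χ β γ) α X + pd (CG χ α β) γ X := by
  have hf : ∀ i : Fin 3, ContDiff ℝ (⊤ : ℕ∞) (fun Y => χ Y i) := fun i => contDiff_pi.mp hχ i
  set f : Fin 3 → (Fin 3 → ℝ) → ℝ := fun i Y => χ Y i with hfdef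
  have hfd : ∀ (i : Fin 3) (Y : Fin 3 → ℝ), DifferentiableAt ℝ (f i) Y :=
    fun i Y => (hf i).differentiable (by simp) |>.differentiableAt
  have hpd : ∀ (i : Fin 3) (a : Fin 3), ContDiff ℝ (⊤ : ℕ∞) (pd (f i) a) :=
    fun i a => pd_smooth (hf i) a
  have hpdd : ∀ (i a : Fin 3) (Y : Fin 3 → ℝ), DifferentiableAt ℝ (pd (f i) a) Y :=
    fun i a Y => (hpd i a).differentiable (by simp) |>.differentiableAt
  have hpd2 : ∀ (i a b : Fin 3), ContDiff ℝ (⊤ : ℕ∞) (pd (pd (f i) a) b) :=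
    fun i a b => pd_smooth (hpd i a) b
  have hpd2d : ∀ (i a b : Fin 3) (Y : Fin 3 → ℝ), DifferentiableAt ℝ (pd (pd (f i) a) b) Y :=
    fun i a b Y => (hpd2 i a b).differentiable (by simp) |>.differentiableAt
  -- step 1
  have step1 : pd (fun Y => ∑ i, (χ Y i - χ X i) ^ 2) α
      = fun Y => ∑ i, ((f i Y - χ X i) * pd (f i) α Y + (f i Y - χ X i) * pd (f i) α Y) := by
    funext Y
    have := pd_sum (X := Y) (α := α) (fun i Z => (χ Z i - χ X i) ^ 2)
      (fun i => (((hf i).differentiable (by simp) |>.differentiableAt).sub_const _).pow 2)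
    rw [this]
    refine Finset.sum_congr rfl fun i _ => ?_
    have h2 : pd (fun Z => (f i Z - χ X i) ^ 2) α Y
        = pd (fun Z => (f i Z - χ X i) * (f i Z - χ X i)) α Y := by
      congr 1; funext Z; ring
    have hd : DifferentiableAt ℝ (fun Z => f i Z - χ X i) Y := (hfd i Y).sub_const _
    rw [h2, pd_mul hd hd, pd_sub_const _ (hfd i Y)]
    ring
  -- step 2
  have step2 : pd (pd (fun Y => ∑ i, (χ Y i - χ X i) ^ 2) α) β
      = fun Y => ∑ i, ((pd (f i) β Y * pd (f i) α Y + (f i Y - χ X i) * pd (pd (f i) α) β Y)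
          + (pd (f i) β Y * pd (f i) α Y + (f i Y - χ X i) * pd (pd (f i) α) β Y)) := by
    funext Y
    rw [step1]
    have hterm : ∀ i : Fin 3, DifferentiableAt ℝ
        (fun Z => (f i Z - χ X i) * pd (f i) α Z + (f i Z - χ X i) * pd (f i) α Z) Y := by
      intro i
      exact (((hfd i Y).sub_const _).mul (hpdd i α Y)).add
        (((hfd i Y).sub_const _).mul (hpdd i α Y))
    rw [pd_sum _ hterm]
    refine Finset.sum_congr rfl fun i _ => ?_
    have hd : DifferentiableAt ℝ (fun Z => f i Z - χ X i) Y := (hfd i Y).sub_const _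
    have := pd_mul (α := β) (X := Y) hd (hpdd i α Y)
    rw [show (fun Z => (f i Z - χ X i) * pd (f i) α Z + (f i Z - χ X i) * pd (f i) α Z)
        = (fun Z => ((fun W => (f i W - χ X i) * pd (f i) α W) Z
            + (fun W => (f i W - χ X i) * pd (f i) α W) Z)) from rfl]
    rw [pd, fderiv_fun_add (f := (fun W => (f i W - χ X i) * pd (f i) α W)) (g := (fun W => (f i W - χ X i) * pd (f i) α W)) (hd.mul (hpdd i α Y)) (hd.mul (hpdd i α Y))]
    simp only [ContinuousLinearMap.add_apply]
    have hm : fderiv ℝ (fun W => (f i W - χ X i) * pd (f i) α W) Y (Pi.single β 1)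
        = pd (f i) β Y * pd (f i) α Y + (f i Y - χ X i) * pd (pd (f i) α) β Y := by
      have := pd_mul (α := β) (X := Y) hd (hpdd i α Y)
      rw [pd_sub_const _ (hfd i Y)] at this
      exact this
    rw [hm]
  -- step 3: apply pd γ at X; note f i X - χ X i = 0
  have step3 : pd (pd (pd (fun Y => ∑ i, (χ Y i - χ X i) ^ 2) α) β) γ X
      = ∑ i, ((pd (pd (f i) β) γ X * pd (f i) α X + pd (f i) β X * pd (pd (f i) α) γ X
            + pd (f i) γ X * pd (pd (f i) α) β X)
          + (pd (pd (f i) β) γ X * pd (f i) α X + pd (f i) β X * pd (pd (f i) α) γ X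
            + pd (f i) γ X * pd (pd (f i) α) β X)) := by
    rw [step2]
    have hterm : ∀ i : Fin 3, DifferentiableAt ℝ
        (fun Y => (pd (f i) β Y * pd (f i) α Y + (f i Y - χ X i) * pd (pd (f i) α) β Y)
          + (pd (f i) β Y * pd (f i) α Y + (f i Y - χ X i) * pd (pd (f i) α) β Y)) X := by
      intro i
      have h1 : DifferentiableAt ℝ (fun Y => pd (f i) β Y * pd (f i) α Y
          + (f i Y - χ X i) * pd (pd (f i) α) β Y) X :=
        ((hpdd i β X).mul (hpdd i α X)).add (((hfd i X).sub_const _).mul (hpd2d i α β X))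
      exact h1.add h1
    rw [pd_sum _ hterm]
    refine Finset.sum_congr rfl fun i _ => ?_
    have h1 : DifferentiableAt ℝ (fun Y => pd (f i) β Y * pd (f i) α Y) X :=
      (hpdd i β X).mul (hpdd i α X)
    have h2 : DifferentiableAt ℝ (fun Y => (f i Y - χ X i) * pd (pd (f i) α) β Y) X :=
      ((hfd i X).sub_const _).mul (hpd2d i α β X)
    have key : pd (fun Y => pd (f i) β Y * pd (f i) α Y
        + (f i Y - χ X i) * pd (pd (f i) α) β Y) γ X
        = pd (pd (f i) β) γ X * pd (f i) α X + pd (f i) β X * pd (pd (f i) α) γ X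
          + pd (f i) γ X * pd (pd (f i) α) β X := by
      rw [show (fun Y => pd (f i) β Y * pd (f i) α Y + (f i Y - χ X i) * pd (pd (f i) α) β Y)
          = (fun Y => ((fun W => pd (f i) β W * pd (f i) α W) Y
              + (fun W => (f i W - χ X i) * pd (pd (f i) α) β W) Y)) from rfl]
      rw [pd, fderiv_fun_add h1 h2, ContinuousLinearMap.add_apply]
      have hA : fderiv ℝ (fun W => pd (f i) β W * pd (f i) α W) X (Pi.single γ 1)
          = pd (pd (f i) β) γ X * pd (f i) α X + pd (f i) β X * pd (pd (f i) α) γ X :=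
        pd_mul (hpdd i β X) (hpdd i α X)
      have hB : fderiv ℝ (fun W => (f i W - χ X i) * pd (pd (f i) α) β W) X (Pi.single γ 1)
          = pd (f i) γ X * pd (pd (f i) α) β X := by
        have := pd_mul (α := γ) (X := X) ((hfd i X).sub_const (χ X i)) (hpd2d i α β X)
        rw [pd_sub_const _ (hfd i X)] at this
        rw [show f i X - χ X i = 0 from sub_self _, zero_mul, add_zero] at this
        exact this
      rw [hA, hB]
    rw [show (fun Y => (pd (f i) β Y * pd (f i) α Y + (f i Y - χ X i) * pd (pd (f i) α) β Y)
          + (pd (f i) β Y * pd (f i) α Y + (f i Y - χ X i) * pd (pd (f i) α) β Y))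
        = (fun Y => ((fun W => pd (f i) β W * pd (f i) α W + (f i W - χ X i) * pd (pd (f i) α) β W) Y
            + (fun W => pd (f i) β W * pd (f i) α W + (f i W - χ X i) * pd (pd (f i) α) β W) Y)) from rfl]
    rw [pd, fderiv_fun_add (f := (fun W => pd (f i) β W * pd (f i) α W + (f i W - χ X i) * pd (pd (f i) α) β W))
      (g := (fun W => pd (f i) β W * pd (f i) α W + (f i W - χ X i) * pd (pd (f i) α) β W)) (h1.add h2) (h1.add h2), ContinuousLinearMap.add_apply]
    have := key
    rw [pd] at this
    rw [this]
  -- RHS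
  have hCG : ∀ (a b c : Fin 3), pd (CG χ a b) c X
      = ∑ i, (pd (pd (f i) a) c X * pd (f i) b X + pd (f i) a X * pd (pd (f i) b) c X) := by
    intro a b c
    have : CG χ a b = fun Y => ∑ i, pd (f i) a Y * pd (f i) b Y := rfl
    rw [this, pd_sum (fun i Y => pd (f i) a Y * pd (f i) b Y) (fun i => (hpdd i a X).mul (hpdd i b X))]
    exact Finset.sum_congr rfl fun i _ => pd_mul (hpdd i a X) (hpdd i b X)
  rw [step3, hCG, hCG, hCG]
  rw [← Finset.sum_add_distrib, ← Finset.sum_add_distrib]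
  refine Finset.sum_congr rfl fun i _ => ?_
  rw [pd_comm (hf i) β γ, pd_comm (hf i) α γ, pd_comm (hf i) α β]
  ring
end

section
/- Piola's explicit formula for the first trinomial of his table (15): suppose the deformation gradient F(X) is invertible at a point X ∈ ℝ³, so that det C(X) ≠ 0. Write P₁ := ∂C₁₁/∂X¹, P₂ := 2∂C₁₂/∂X¹ − ∂C₁₁/∂X², P₃ := 2∂C₁₃/∂X¹ − ∂C₁₁/∂X³ (all evaluated at X). Then 4 · det C(X) · Σ_{i=1}^{3} ( ∂²χ^i/∂X¹∂X¹ (X) )² = (C₂₂C₃₃ − C₂₃²)P₁² + (C₁₁C₃₃ − C₁₃²)P₂² + (C₁₁C₂₂ − C₁₂²)P₃² + 2(C₁₃C₂₃ − C₁₂C₃₃)P₁P₂ + 2(C₁₂C₂₃ − C₂₂C₁₃)P₁P₃ + 2(C₁₂C₁₃ − C₁₁C₂₃)P₂P₃, where all entries C_{αβ} are evaluated at X; note det C = C₁₁C₂₂C₃₃ + 2C₁₂C₁₃C₂₃ − C₁₁C₂₃² − C₂₂C₁₃² − C₃₃C₁₂². -/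
/-- The deformation gradient F(X), with entries F^i_α = ∂χ^i/∂X^α, as a matrix. -/
noncomputable def Fgrad (χ : (Fin 3 → ℝ) → (Fin 3 → ℝ)) (X : Fin 3 → ℝ) :
    Matrix (Fin 3) (Fin 3) ℝ :=
  Matrix.of fun i α => pd (fun Y => χ Y i) α X

/-- The right Cauchy–Green tensor as a matrix. -/
noncomputable def CGmat (χ : (Fin 3 → ℝ) → (Fin 3 → ℝ)) (X : Fin 3 → ℝ) :
    Matrix (Fin 3) (Fin 3) ℝ :=
  Matrix.of fun α β => CG χ α β X

private lemma pd_contDiff {f : (Fin 3 → ℝ) → ℝ} (hf : ContDiff ℝ (⊤ : ℕ∞) f) (α : Fin 3) :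
    ContDiff ℝ (⊤ : ℕ∞) (pd f α) :=
  (hf.fderiv_right (by simp)).clm_apply contDiff_const

private lemma pd_pd_eq {f : (Fin 3 → ℝ) → ℝ} (hf : ContDiff ℝ (⊤ : ℕ∞) f) (α γ : Fin 3)
    (X : Fin 3 → ℝ) :
    pd (pd f α) γ X = fderiv ℝ (fderiv ℝ f) X (Pi.single γ 1) (Pi.single α 1) := by
  have hd : DifferentiableAt ℝ (fderiv ℝ f) X :=
    ((hf.fderiv_right (m := (⊤ : ℕ∞)) (by simp)).differentiable (by simp)) X
  show (fderiv ℝ (fun Y => fderiv ℝ f Y (Pi.single α 1)) X) (Pi.single γ 1) = _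
  rw [fderiv_clm_apply (c := fderiv ℝ f) (u := fun _ => Pi.single α 1) hd
    (differentiableAt_const _)]
  simp

private lemma pd_symm {f : (Fin 3 → ℝ) → ℝ} (hf : ContDiff ℝ (⊤ : ℕ∞) f) (α γ : Fin 3)
    (X : Fin 3 → ℝ) : pd (pd f α) γ X = pd (pd f γ) α X := by
  rw [pd_pd_eq hf α γ, pd_pd_eq hf γ α]
  exact (hf.contDiffAt.isSymmSndFDerivAt (by rw [minSmoothness_of_isRCLikeNormedField]; exact WithTop.coe_le_coe.mpr le_top)) _ _

private lemma pd_CG (χ : (Fin 3 → ℝ) → (Fin 3 → ℝ)) (hχ : ContDiff ℝ (⊤ : ℕ∞) χ)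
    (α β γ : Fin 3) (X : Fin 3 → ℝ) :
    pd (CG χ α β) γ X = ∑ i : Fin 3,
      (pd (pd (fun Y => χ Y i) α) γ X * pd (fun Y => χ Y i) β X
        + pd (fun Y => χ Y i) α X * pd (pd (fun Y => χ Y i) β) γ X) := by
  have hfi : ∀ i : Fin 3, ContDiff ℝ (⊤ : ℕ∞) (fun Y => χ Y i) := fun i => contDiff_pi.mp hχ i
  have hsum : HasFDerivAt (CG χ α β)
      (∑ i : Fin 3, (pd (fun Y => χ Y i) α X • fderiv ℝ (pd (fun Y => χ Y i) β) X
        + pd (fun Y => χ Y i) β X • fderiv ℝ (pd (fun Y => χ Y i) α) X)) X := by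
    apply HasFDerivAt.fun_sum
    intro i _
    exact ((pd_contDiff (hfi i) α).differentiable (by simp) X).hasFDerivAt.mul
      ((pd_contDiff (hfi i) β).differentiable (by simp) X).hasFDerivAt
  have : pd (CG χ α β) γ X = (∑ i : Fin 3,
      (pd (fun Y => χ Y i) α X • fderiv ℝ (pd (fun Y => χ Y i) β) X
        + pd (fun Y => χ Y i) β X • fderiv ℝ (pd (fun Y => χ Y i) α) X)) (Pi.single γ 1) := by
    simp only [pd, hsum.fderiv]
  rw [this]
  simp only [ContinuousLinearMap.sum_apply, ContinuousLinearMap.add_apply,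
    ContinuousLinearMap.coe_smul', Pi.smul_apply, smul_eq_mul]
  refine Finset.sum_congr rfl fun i _ => ?_
  simp only [pd]
  ring


/-- Piola's explicit formula for the first trinomial of his table (15):
4 det C · Σᵢ (∂²χⁱ/∂X¹∂X¹)² is the stated quadratic form in
P₁ = ∂C₁₁/∂X¹, P₂ = 2∂C₁₂/∂X¹ − ∂C₁₁/∂X², P₃ = 2∂C₁₃/∂X¹ − ∂C₁₁/∂X³
(indices 1,2,3 rendered as 0,1,2). -/
theorem piola_first_trinomial_formula
    (χ : (Fin 3 → ℝ) → (Fin 3 → ℝ)) (hχ : ContDiff ℝ (⊤ : ℕ∞) χ)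
    (X : Fin 3 → ℝ) (hF : IsUnit (Fgrad χ X)) :
    4 * (CGmat χ X).det * ∑ i, (pd (pd (fun Y => χ Y i) 0) 0 X) ^ 2
      = (CGmat χ X 1 1 * CGmat χ X 2 2 - (CGmat χ X 1 2) ^ 2)
          * (pd (CG χ 0 0) 0 X) ^ 2
        + (CGmat χ X 0 0 * CGmat χ X 2 2 - (CGmat χ X 0 2) ^ 2)
          * (2 * pd (CG χ 0 1) 0 X - pd (CG χ 0 0) 1 X) ^ 2
        + (CGmat χ X 0 0 * CGmat χ X 1 1 - (CGmat χ X 0 1) ^ 2)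
          * (2 * pd (CG χ 0 2) 0 X - pd (CG χ 0 0) 2 X) ^ 2
        + 2 * (CGmat χ X 0 2 * CGmat χ X 1 2 - CGmat χ X 0 1 * CGmat χ X 2 2)
          * (pd (CG χ 0 0) 0 X) * (2 * pd (CG χ 0 1) 0 X - pd (CG χ 0 0) 1 X)
        + 2 * (CGmat χ X 0 1 * CGmat χ X 1 2 - CGmat χ X 1 1 * CGmat χ X 0 2)
          * (pd (CG χ 0 0) 0 X) * (2 * pd (CG χ 0 2) 0 X - pd (CG χ 0 0) 2 X)
        + 2 * (CGmat χ X 0 1 * CGmat χ X 0 2 - CGmat χ X 0 0 * CGmat χ X 1 2)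
          * (2 * pd (CG χ 0 1) 0 X - pd (CG χ 0 0) 1 X)
          * (2 * pd (CG χ 0 2) 0 X - pd (CG χ 0 0) 2 X) := by
  have hfi : ∀ i : Fin 3, ContDiff ℝ (⊤ : ℕ∞) (fun Y => χ Y i) := fun i => contDiff_pi.mp hχ i
  have hs : ∀ i α γ, pd (pd (fun Y => χ Y i) α) γ X = pd (pd (fun Y => χ Y i) γ) α X :=
    fun i α γ => pd_symm (hfi i) α γ X
  rw [pd_CG χ hχ 0 0 0 X, pd_CG χ hχ 0 1 0 X, pd_CG χ hχ 0 0 1 X,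
    pd_CG χ hχ 0 2 0 X, pd_CG χ hχ 0 0 2 X]
  simp only [Matrix.det_fin_three, CGmat, Matrix.of_apply, CG, Fin.sum_univ_three]
  rw [hs 0 1 0, hs 1 1 0, hs 2 1 0, hs 0 2 0, hs 1 2 0, hs 2 2 0]
  ring
end
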